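/- arXiv:1203.6391 — 2 statements merged into one kernel-verified Lean document; each statement's English description precedes it below -/
import Mathlib

section
/- Let C ⊆ [0,1) be a closed set with empty interior, and let F = {(x,y) ∈ [0,1) × [0,1) : x − y (mod 1) ∈ C}. Then F contains no measurable rectangle α × β with both α and β of positive Lebesgue measure. -/
/-!
Integrating over `g`, the measures `μ (β ∩ (g + ·) ⁻¹' α)` have total mass `μ α * μ β`, so for
some `g` the set `E = β ∩ (g + ·) ⁻¹' α` has positive measure; since `g + (E - E) ⊆ α - β`,
Steinhaus's theorem for `E` makes `α - β` a neighbourhood of `g`. On each interval `(n, n + 1)`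
the map `Int.fract` is a translation, so `Int.fract '' (α - β)` has nonempty interior, whereas a
rectangle `α ×ˢ β ⊆ F` forces this set into `C`.
-/

open MeasureTheory Set Filter Topology Pointwise

section
variable {G : Type*} [MeasurableSpace G] [AddCommGroup G] [MeasurableAdd₂ G]

section
variable (μ : Measure G) [SFinite μ] [μ.IsAddLeftInvariant]

theorem lintegral_measure_inter_preimage_add_left {s t : Set G} (hs : MeasurableSet s)
    (ht : MeasurableSet t) :
    ∫⁻ g, μ (s ∩ (g + ·) ⁻¹' t) ∂μ = μ s * μ t := by
  have hslice (g : G) :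
      μ (s ∩ (g + ·) ⁻¹' t) = ∫⁻ x, s.indicator 1 x * t.indicator 1 (g + x) ∂μ := by
    rw [← lintegral_indicator_one (hs.inter (ht.preimage (measurable_const_add g)))]
    congr 1 with x
    by_cases hx : x ∈ s <;> by_cases hgx : g + x ∈ t <;> simp [hx, hgx]
  have hfiber (x : G) : ∫⁻ g, t.indicator 1 (g + x) ∂μ = μ t := by
    simp_rw [add_comm _ x]
    rw [lintegral_add_left_eq_self (t.indicator 1) x, lintegral_indicator_one ht]
  simp_rw [hslice]
  rw [lintegral_lintegral_swap]
  · have hinner (x : G) :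
        ∫⁻ g, s.indicator 1 x * t.indicator 1 (g + x) ∂μ = s.indicator 1 x * μ t := by
      rw [lintegral_const_mul _
        (by exact (measurable_one.indicator ht).comp (measurable_add_const x)), hfiber]
    simp_rw [hinner]
    rw [lintegral_mul_const _ (measurable_one.indicator hs), lintegral_indicator_one hs]
  · exact (((measurable_one.indicator hs).comp measurable_snd).mul
      ((measurable_one.indicator ht).comp (measurable_fst.add measurable_snd))).aemeasurable

theorem exists_measure_inter_preimage_add_left_pos {s t : Set G} (hs : MeasurableSet s)
    (ht : MeasurableSet t) (hs₀ : 0 < μ s) (ht₀ : 0 < μ t) :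
    ∃ g, 0 < μ (s ∩ (g + ·) ⁻¹' t) := by
  by_contra! h
  have : μ s * μ t = 0 := by
    simp [← lintegral_measure_inter_preimage_add_left μ hs ht, nonpos_iff_eq_zero.mp (h _)]
  exact (ENNReal.mul_pos hs₀.ne' ht₀.ne').ne' this

end

theorem exists_sub_mem_nhds_of_addHaar_pos [TopologicalSpace G] [IsTopologicalAddGroup G]
    [BorelSpace G] [LocallyCompactSpace G] (μ : Measure G) [μ.IsAddHaarMeasure] [SFinite μ]
    [μ.InnerRegular]
    {s t : Set G} (hs : MeasurableSet s) (ht : MeasurableSet t) (hs₀ : 0 < μ s)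
    (ht₀ : 0 < μ t) : ∃ g, s - t ∈ 𝓝 g := by
  obtain ⟨g, hg⟩ := exists_measure_inter_preimage_add_left_pos μ ht hs ht₀ hs₀
  have hE := Measure.sub_mem_nhds_zero_of_addHaar_pos μ _
    (ht.inter (hs.preimage (measurable_const_add g))) hg
  refine ⟨g, ?_⟩
  rw [← map_add_left_nhds_zero g, mem_map]
  filter_upwards [hE]
  rintro _ ⟨e, he, e', he', rfl⟩
  exact ⟨g + e, he.2, e', he'.1, add_sub_assoc g e e'⟩

end

theorem Int.nonempty_interior_image_fract_of_mem_nhds {U : Set ℝ} {x : ℝ} (hU : U ∈ 𝓝 x) :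
    (interior (Int.fract '' U)).Nonempty := by
  set n := ⌊x⌋
  set W := interior U ∩ Ioo (n : ℝ) (n + 1)
  obtain ⟨y, hyW⟩ : W.Nonempty :=
    nonempty_of_mem (inter_mem (mem_nhdsWithin_of_mem_nhds (interior_mem_nhds.2 hU))
      (Ioo_mem_nhdsGT_of_mem ⟨Int.floor_le x, Int.lt_floor_add_one x⟩))
  have hfract : (· - (n : ℝ)) '' W ⊆ Int.fract '' U := by
    rintro _ ⟨z, ⟨hzU, hzn⟩, rfl⟩
    refine ⟨z, interior_subset hzU, ?_⟩
    rw [Int.fract, Int.floor_eq_iff.2 ⟨hzn.1.le, hzn.2⟩]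
  exact ⟨y - n, interior_maximal hfract
    (isOpenMap_sub_right _ _ (isOpen_interior.inter isOpen_Ioo)) ⟨y, hyW, rfl⟩⟩

theorem stmt_6_general (C : Set ℝ)
    (hCint : interior C = ∅)
    (F : Set (ℝ × ℝ))
    (hF : F = {p : ℝ × ℝ | p.1 ∈ Set.Ico (0:ℝ) 1 ∧ p.2 ∈ Set.Ico (0:ℝ) 1 ∧
      Int.fract (p.1 - p.2) ∈ C}) :
    ∀ α β : Set ℝ, α ⊆ Set.Ico 0 1 → β ⊆ Set.Ico 0 1 →
      MeasurableSet α → MeasurableSet β → 0 < volume α → 0 < volume β →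
      ¬ α ×ˢ β ⊆ F := by
  intro α β _ _ hα hβ hα₀ hβ₀ hαβ
  obtain ⟨g, hg⟩ := exists_sub_mem_nhds_of_addHaar_pos volume hα hβ hα₀ hβ₀
  have hfract : Int.fract '' (α - β) ⊆ C := by
    rintro _ ⟨_, ⟨a, ha, b, hb, rfl⟩, rfl⟩
    have hab := hαβ (mk_mem_prod ha hb)
    rw [hF] at hab
    exact hab.2.2
  have hC := (Int.nonempty_interior_image_fract_of_mem_nhds hg).mono (interior_mono hfract)
  rw [hCint] at hC
  exact not_nonempty_empty hC

/-- Let `C ⊆ [0,1)` be a closed set with empty interior and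
`F = {(x,y) ∈ [0,1)² : x - y (mod 1) ∈ C}`. Then `F` contains no measurable rectangle
`α ×ˢ β` with both `α` and `β` of positive Lebesgue measure. -/
theorem stmt_6 (C : Set ℝ) (hC : C ⊆ Set.Ico 0 1) (hCclosed : IsClosed C)
    (hCint : interior C = ∅)
    (F : Set (ℝ × ℝ))
    (hF : F = {p : ℝ × ℝ | p.1 ∈ Set.Ico (0:ℝ) 1 ∧ p.2 ∈ Set.Ico (0:ℝ) 1 ∧
      Int.fract (p.1 - p.2) ∈ C}) :
    ∀ α β : Set ℝ, α ⊆ Set.Ico 0 1 → β ⊆ Set.Ico 0 1 →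
      MeasurableSet α → MeasurableSet β → 0 < volume α → 0 < volume β →
      ¬ α ×ˢ β ⊆ F :=
  stmt_6_general C hCint F hF
end

section
/- Let L be a lattice of closed subspaces of a Hilbert space K containing 0 and K, let M be a lattice of closed subspaces of H with a distinguished family of atoms {E_j : j ∈ J} which are mutually 'independent' in the sense that E_k ∩ (closed span of {E_j : j ≠ k}) = 0 for each k. Suppose for each j we have P_j, Q_j ∈ L. If ⋁_{j∈J} (P_j ⊗ E_j) = ⋁_{j∈J} (Q_j ⊗ E_j) as closed subspaces of K ⊗ H, and each E_j ≠ 0, then in the two-atom case J = {1,2} with E_1 ∨ E_2 = H one has P_j = Q_j for j = 1, 2. -/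
open scoped InnerProductSpace
open Filter

variable {K H T : Type*}
  [NormedAddCommGroup K] [InnerProductSpace ℂ K] [CompleteSpace K]
  [NormedAddCommGroup H] [InnerProductSpace ℂ H] [CompleteSpace H]
  [NormedAddCommGroup T] [InnerProductSpace ℂ T] [CompleteSpace T]

/-- A realization of the Hilbert space tensor product `K ⊗ H` as a Hilbert space `T`. -/
structure HilbertTensor (K H T : Type*)
    [NormedAddCommGroup K] [InnerProductSpace ℂ K]
    [NormedAddCommGroup H] [InnerProductSpace ℂ H]
    [NormedAddCommGroup T] [InnerProductSpace ℂ T] where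
  tmul : K →ₗ[ℂ] H →ₗ[ℂ] T
  inner_tmul : ∀ (x x' : K) (y y' : H),
    ⟪tmul x y, tmul x' y'⟫_ℂ = ⟪x, x'⟫_ℂ * ⟪y, y'⟫_ℂ
  dense_span : Dense (Submodule.span ℂ {z | ∃ x y, z = tmul x y} : Set T)

/-- The subspace `P ⊗ E` of `K ⊗ H`: the closed linear span of the elementary tensors. -/
def subTensor (tp : HilbertTensor K H T) (P : Submodule ℂ K) (E : Submodule ℂ H) :
    Submodule ℂ T :=
  (Submodule.span ℂ {z | ∃ p ∈ P, ∃ e ∈ E, z = tp.tmul p e}).topologicalClosure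


/-! Pick `e ∈ E₁ \ E₂`; as `E₂` is closed, some `f ⊥ E₂` has `⟪f, e⟫ ≠ 0`. The slice map
`S_f : x ⊗ y ↦ ⟪f, y⟫ • x` (the adjoint of `k ↦ k ⊗ f`) is continuous, kills `Q₂ ⊗ E₂` and maps
`Q₁ ⊗ E₁` into the closed subspace `Q₁`, hence maps the whole closed join into `Q₁`. Since
`S_f (p ⊗ e) = ⟪f, e⟫ • p`, this gives `P₁ ≤ Q₁`; the other inclusions follow by symmetry. -/

theorem exists_inner_ne_zero_of_notMem {𝕜 E : Type*} [RCLike 𝕜] [NormedAddCommGroup E]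
    [InnerProductSpace 𝕜 E] [CompleteSpace E] {U : Submodule 𝕜 E} (hU : IsClosed (U : Set E))
    {x : E} (hx : x ∉ U) : ∃ f ∈ Uᗮ, ⟪f, x⟫_𝕜 ≠ 0 := by
  by_contra! h
  have hx' : x ∈ Uᗮᗮ := (Submodule.mem_orthogonal _ _).mpr h
  rw [Submodule.orthogonal_orthogonal_eq_closure, hU.submodule_topologicalClosure_eq] at hx'
  exact hx hx'

namespace HilbertTensor

variable (tp : HilbertTensor K H T)

omit [CompleteSpace K] [CompleteSpace H] [CompleteSpace T] in
theorem norm_tmul (x : K) (y : H) : ‖tp.tmul x y‖ = ‖x‖ * ‖y‖ := by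
  have h := tp.inner_tmul x x y y
  simp only [inner_self_eq_norm_sq_to_K] at h
  have hsq : ‖tp.tmul x y‖ ^ 2 = (‖x‖ * ‖y‖) ^ 2 := by rw [mul_pow]; exact_mod_cast h
  exact (pow_left_inj₀ (norm_nonneg _) (by positivity) two_ne_zero).mp hsq

omit [CompleteSpace K] [CompleteSpace H] [CompleteSpace T] in
noncomputable def tmulRight (f : H) : K →L[ℂ] T :=
  (tp.tmul.flip f).mkContinuous ‖f‖ fun k => ((tp.norm_tmul k f).trans (mul_comm _ _)).le

omit [CompleteSpace H] in
noncomputable def slice (f : H) : T →L[ℂ] K :=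
  ContinuousLinearMap.adjoint (tp.tmulRight f)

omit [CompleteSpace H] in
theorem slice_tmul (f : H) (x : K) (y : H) : tp.slice f (tp.tmul x y) = ⟪f, y⟫_ℂ • x := by
  refine ext_inner_left ℂ fun k => ?_
  rw [slice, ContinuousLinearMap.adjoint_inner_right, inner_smul_right]
  exact (tp.inner_tmul k x f y).trans (mul_comm _ _)

end HilbertTensor

section subTensor

variable (tp : HilbertTensor K H T)

omit [CompleteSpace K] [CompleteSpace H] [CompleteSpace T] in
theorem tmul_mem_subTensor {P : Submodule ℂ K} {E : Submodule ℂ H} {p : K} {e : H}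
    (hp : p ∈ P) (he : e ∈ E) : tp.tmul p e ∈ subTensor tp P E :=
  Submodule.le_topologicalClosure _ (Submodule.subset_span ⟨p, hp, e, he, rfl⟩)

omit [CompleteSpace K] [CompleteSpace H] [CompleteSpace T] in
theorem subTensor_le_of_tmul_mem {P : Submodule ℂ K} {E : Submodule ℂ H} {C : Submodule ℂ T}
    (hC : IsClosed (C : Set T)) (h : ∀ p ∈ P, ∀ e ∈ E, tp.tmul p e ∈ C) :
    subTensor tp P E ≤ C := by
  refine Submodule.topologicalClosure_minimal _ ?_ hC
  rw [Submodule.span_le]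
  rintro _ ⟨p, hp, e, he, rfl⟩
  exact h p hp e he

theorem le_of_subTensor_le_closure_sup {E₁ E₂ : Submodule ℂ H} (hE₂c : IsClosed (E₂ : Set H))
    (hE : ¬E₁ ≤ E₂) {P Q₁ Q₂ : Submodule ℂ K} (hQ₁c : IsClosed (Q₁ : Set K))
    (hle : subTensor tp P E₁ ≤ (subTensor tp Q₁ E₁ ⊔ subTensor tp Q₂ E₂).topologicalClosure) :
    P ≤ Q₁ := by
  obtain ⟨e, he₁, he₂⟩ := SetLike.not_le_iff_exists.mp hE
  obtain ⟨f, hf, hfe⟩ := exists_inner_ne_zero_of_notMem hE₂c he₂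
  set C := Q₁.comap (tp.slice f : T →ₗ[ℂ] K)
  have hC : IsClosed (C : Set T) := hQ₁c.preimage (tp.slice f).continuous
  have hslice : (subTensor tp Q₁ E₁ ⊔ subTensor tp Q₂ E₂).topologicalClosure ≤ C := by
    refine Submodule.topologicalClosure_minimal _ (sup_le ?_ ?_) hC
    · refine subTensor_le_of_tmul_mem tp hC fun q hq e' _ => ?_
      simp only [C, Submodule.mem_comap, ContinuousLinearMap.coe_coe, tp.slice_tmul]
      exact Q₁.smul_mem _ hq
    · refine subTensor_le_of_tmul_mem tp hC fun q _ e' he' => ?_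
      simp [C, tp.slice_tmul, inner_eq_zero_symm.mp (hf e' he')]
  intro p hp
  have hp' := hslice (hle (tmul_mem_subTensor tp hp he₁))
  simp only [C, Submodule.mem_comap, ContinuousLinearMap.coe_coe, tp.slice_tmul] at hp'
  exact (Q₁.smul_mem_iff hfe).mp hp'

end subTensor

theorem stmt_14_general (tp : HilbertTensor K H T)
    (E₁ E₂ : Submodule ℂ H) (hE₁c : IsClosed (E₁ : Set H)) (hE₂c : IsClosed (E₂ : Set H))
    (hE₁ : E₁ ≠ ⊥) (hE₂ : E₂ ≠ ⊥)
    (hind : E₁ ⊓ E₂ = ⊥)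
    (L : Set (Submodule ℂ K)) (hLc : ∀ M ∈ L, IsClosed (M : Set K))
    (P₁ P₂ Q₁ Q₂ : Submodule ℂ K)
    (hP₁ : P₁ ∈ L) (hP₂ : P₂ ∈ L) (hQ₁ : Q₁ ∈ L) (hQ₂ : Q₂ ∈ L)
    (heq : (subTensor tp P₁ E₁ ⊔ subTensor tp P₂ E₂).topologicalClosure =
           (subTensor tp Q₁ E₁ ⊔ subTensor tp Q₂ E₂).topologicalClosure) :
    P₁ = Q₁ ∧ P₂ = Q₂ := by
  have h₁₂ : ¬E₁ ≤ E₂ := fun h => hE₁ (by rwa [inf_eq_left.mpr h] at hind)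
  have h₂₁ : ¬E₂ ≤ E₁ := fun h => hE₂ (by rwa [inf_eq_right.mpr h] at hind)
  have heq' : (subTensor tp P₂ E₂ ⊔ subTensor tp P₁ E₁).topologicalClosure =
      (subTensor tp Q₂ E₂ ⊔ subTensor tp Q₁ E₁).topologicalClosure := by
    rwa [sup_comm, sup_comm (subTensor tp Q₂ E₂)]
  have hsub {A B : Submodule ℂ T} (h : A.topologicalClosure = B) : ∀ A' ≤ A, A' ≤ B :=
    fun A' hA' => h ▸ hA'.trans A.le_topologicalClosure
  exact ⟨le_antisymm
      (le_of_subTensor_le_closure_sup tp hE₂c h₁₂ (hLc Q₁ hQ₁) (hsub heq _ le_sup_left))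
      (le_of_subTensor_le_closure_sup tp hE₂c h₁₂ (hLc P₁ hP₁) (hsub heq.symm _ le_sup_left)),
    le_antisymm
      (le_of_subTensor_le_closure_sup tp hE₁c h₂₁ (hLc Q₂ hQ₂) (hsub heq' _ le_sup_left))
      (le_of_subTensor_le_closure_sup tp hE₁c h₂₁ (hLc P₂ hP₂) (hsub heq'.symm _ le_sup_left))⟩

/-- Uniqueness of the representation for a two-atom ABSL `M = {0, E₁, E₂, H}`
(`E₁ ∩ E₂ = 0`, `E₁ ∨ E₂ = H`, both atoms nonzero): if `P₁, P₂, Q₁, Q₂` are members of a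
subspace lattice `L` on `K` and `(P₁ ⊗ E₁) ∨ (P₂ ⊗ E₂) = (Q₁ ⊗ E₁) ∨ (Q₂ ⊗ E₂)`, then
`P₁ = Q₁` and `P₂ = Q₂`. -/
theorem stmt_14 (tp : HilbertTensor K H T)
    (E₁ E₂ : Submodule ℂ H) (hE₁c : IsClosed (E₁ : Set H)) (hE₂c : IsClosed (E₂ : Set H))
    (hE₁ : E₁ ≠ ⊥) (hE₂ : E₂ ≠ ⊥)
    (hind : E₁ ⊓ E₂ = ⊥) (hjoin : (E₁ ⊔ E₂).topologicalClosure = ⊤)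
    (L : Set (Submodule ℂ K)) (hLc : ∀ M ∈ L, IsClosed (M : Set K))
    (hbot : ⊥ ∈ L) (htop : ⊤ ∈ L)
    (P₁ P₂ Q₁ Q₂ : Submodule ℂ K)
    (hP₁ : P₁ ∈ L) (hP₂ : P₂ ∈ L) (hQ₁ : Q₁ ∈ L) (hQ₂ : Q₂ ∈ L)
    (heq : (subTensor tp P₁ E₁ ⊔ subTensor tp P₂ E₂).topologicalClosure =
           (subTensor tp Q₁ E₁ ⊔ subTensor tp Q₂ E₂).topologicalClosure) :
    P₁ = Q₁ ∧ P₂ = Q₂ :=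
  stmt_14_general tp E₁ E₂ hE₁c hE₂c hE₁ hE₂ hind L hLc P₁ P₂ Q₁ Q₂ hP₁ hP₂ hQ₁ hQ₂ heq
end
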